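/- arXiv:1508.03606 — 4 statements merged into one kernel-verified Lean document; each statement's English description precedes it below -/
import Mathlib

section
/- Let f(s) = log(1 + exp(s)) and for w₁, w₂, c ∈ ℝ define K₁₂ = f(w₁+w₂+c) − f(w₁+c) − f(w₂+c) + f(c). Then K₁₂ ≥ 0 if and only if w₁·w₂ ≥ 0, and K₁₂ ≤ 0 if and only if w₁·w₂ ≤ 0. -/
/-!
Since `log` is strictly increasing, the sign of
`K₁₂ = log ((1 + e^(w₁+w₂+c)) (1 + e^c)) - log ((1 + e^(w₁+c)) (1 + e^(w₂+c)))`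
is the sign of the difference of the two products, which factors as
`e^c (e^w₁ - 1) (e^w₂ - 1)`; and `e^w - 1` has the sign of `w`.
-/

open Real

noncomputable def softplus (s : ℝ) : ℝ := log (1 + exp s)

section StrictMonoMapZero

variable {α β : Type*} {g : α → β}

lemma StrictMono.apply_nonneg_iff_of_map_zero [LinearOrder α] [Preorder β] [Zero α] [Zero β]
    (hg : StrictMono g) (hg0 : g 0 = 0) (a : α) : 0 ≤ g a ↔ 0 ≤ a := by
  rw [← hg0, hg.le_iff_le]

lemma StrictMono.apply_nonpos_iff_of_map_zero [LinearOrder α] [Preorder β] [Zero α] [Zero β]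
    (hg : StrictMono g) (hg0 : g 0 = 0) (a : α) : g a ≤ 0 ↔ a ≤ 0 := by
  rw [← hg0, hg.le_iff_le]

variable [Ring α] [LinearOrder α] [IsStrictOrderedRing α] [Ring β] [LinearOrder β]
  [IsStrictOrderedRing β]

lemma StrictMono.mul_nonneg_iff_of_map_zero (hg : StrictMono g) (hg0 : g 0 = 0) (a b : α) :
    0 ≤ g a * g b ↔ 0 ≤ a * b := by
  simp only [mul_nonneg_iff, hg.apply_nonneg_iff_of_map_zero hg0,
    hg.apply_nonpos_iff_of_map_zero hg0]

lemma StrictMono.mul_nonpos_iff_of_map_zero (hg : StrictMono g) (hg0 : g 0 = 0) (a b : α) :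
    g a * g b ≤ 0 ↔ a * b ≤ 0 := by
  simp only [mul_nonpos_iff, hg.apply_nonneg_iff_of_map_zero hg0,
    hg.apply_nonpos_iff_of_map_zero hg0]

end StrictMonoMapZero

lemma strictMono_exp_sub_one : StrictMono fun x : ℝ ↦ exp x - 1 :=
  fun _ _ h ↦ sub_lt_sub_right (exp_lt_exp.mpr h) 1

lemma one_add_exp_mul_one_add_exp_sub (a b c : ℝ) :
    (1 + exp (a + b + c)) * (1 + exp c) - (1 + exp (a + c)) * (1 + exp (b + c)) =
      exp c * ((exp a - 1) * (exp b - 1)) := by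
  simp only [exp_add]
  ring

lemma softplus_interaction_eq_log_sub_log (a b c : ℝ) :
    softplus (a + b + c) - softplus (a + c) - softplus (b + c) + softplus c =
      log ((1 + exp (a + b + c)) * (1 + exp c)) -
        log ((1 + exp (a + c)) * (1 + exp (b + c))) := by
  simp only [softplus]
  rw [log_mul (by positivity) (by positivity), log_mul (by positivity) (by positivity)]
  ring

lemma softplus_interaction_nonneg_iff (a b c : ℝ) :
    0 ≤ softplus (a + b + c) - softplus (a + c) - softplus (b + c) + softplus c ↔
      0 ≤ a * b := by
  rw [softplus_interaction_eq_log_sub_log, sub_nonneg, log_le_log_iff (by positivity)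
    (by positivity), ← sub_nonneg, one_add_exp_mul_one_add_exp_sub,
    mul_nonneg_iff_of_pos_left (exp_pos c)]
  exact strictMono_exp_sub_one.mul_nonneg_iff_of_map_zero (by simp) a b

lemma softplus_interaction_nonpos_iff (a b c : ℝ) :
    softplus (a + b + c) - softplus (a + c) - softplus (b + c) + softplus c ≤ 0 ↔
      a * b ≤ 0 := by
  rw [softplus_interaction_eq_log_sub_log, sub_nonpos, log_le_log_iff (by positivity)
    (by positivity), ← sub_nonpos, one_add_exp_mul_one_add_exp_sub,
    ← neg_nonneg, ← mul_neg, mul_nonneg_iff_of_pos_left (exp_pos c), neg_nonneg]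
  exact strictMono_exp_sub_one.mul_nonpos_iff_of_map_zero (by simp) a b

theorem quadratic_coeff_sign_iff (w₁ w₂ c : ℝ) :
    (0 ≤ Real.log (1 + Real.exp (w₁ + w₂ + c)) - Real.log (1 + Real.exp (w₁ + c))
        - Real.log (1 + Real.exp (w₂ + c)) + Real.log (1 + Real.exp c) ↔ 0 ≤ w₁ * w₂) ∧
    (Real.log (1 + Real.exp (w₁ + w₂ + c)) - Real.log (1 + Real.exp (w₁ + c))
        - Real.log (1 + Real.exp (w₂ + c)) + Real.log (1 + Real.exp c) ≤ 0 ↔ w₁ * w₂ ≤ 0) :=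
  ⟨softplus_interaction_nonneg_iff w₁ w₂ c, softplus_interaction_nonpos_iff w₁ w₂ c⟩
end

section
/- Let B' ⊆ V with |B'| = 1, say B' = {1}, and B = {1, m} with m ≠ 1. Write f(s) = log(1+exp(s)), K_{B'}(w,c) = f(w₁+c) − f(c) and K_B(w,c) = f(w₁+w_m+c) − f(w_m+c) − f(w₁+c) + f(c). Then for all w₁, w_m, c: either (K_{B'}(w,c) ≥ 0 and K_B(w,c) ≥ −K_{B'}(w,c)) or (K_{B'}(w,c) ≤ 0 and K_B(w,c) ≤ −K_{B'}(w,c)). -/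
/-!
Both `K_{B'}` and `K_{B'} + K_B = f(w₁ + w_m + c) - f(w_m + c)` are increments of the increasing
function `f` over the same step `w₁`, so they share the sign of `w₁`.
-/

open Real

theorem monotone_log_one_add_exp : Monotone fun s : ℝ => log (1 + exp s) := fun _ _ hab =>
  log_le_log (by positivity) (by gcongr)

theorem Monotone.increments_nonneg_or_nonpos {α β : Type*}
    [AddCommMonoid α] [LinearOrder α] [IsOrderedAddMonoid α]
    [AddCommGroup β] [PartialOrder β] [IsOrderedAddMonoid β]
    {f : α → β} (hf : Monotone f) (w a b : α) :
    (0 ≤ f (w + a) - f a ∧ 0 ≤ f (w + b) - f b) ∨ (f (w + a) - f a ≤ 0 ∧ f (w + b) - f b ≤ 0) := by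
  rcases le_total 0 w with hw | hw
  · exact .inl ⟨sub_nonneg.2 (hf (le_add_of_nonneg_left hw)),
      sub_nonneg.2 (hf (le_add_of_nonneg_left hw))⟩
  · exact .inr ⟨sub_nonpos.2 (hf (add_le_of_nonpos_left hw)),
      sub_nonpos.2 (hf (add_le_of_nonpos_left hw))⟩

theorem edge_pair_necessity_card_two (w₁ wₘ c : ℝ)
    (f : ℝ → ℝ) (hf : ∀ s, f s = Real.log (1 + Real.exp s))
    (KB' KB : ℝ)
    (hKB' : KB' = f (w₁ + c) - f c)
    (hKB : KB = f (w₁ + wₘ + c) - f (wₘ + c) - f (w₁ + c) + f c) :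
    (0 ≤ KB' ∧ -KB' ≤ KB) ∨ (KB' ≤ 0 ∧ KB ≤ -KB') := by
  have hmono : Monotone f := by
    rw [funext hf]
    exact monotone_log_one_add_exp
  rw [add_assoc] at hKB
  rcases hmono.increments_nonneg_or_nonpos w₁ c (wₘ + c) with ⟨h₁, h₂⟩ | ⟨h₁, h₂⟩
  · exact .inl ⟨by linarith, by linarith⟩
  · exact .inr ⟨by linarith, by linarith⟩
end

section
/- For every J ∈ ℝ with J ≥ 0 and every ε > 0, there exist w₁, w_m, c ∈ ℝ such that |K_B − J| ≤ ε and |K_{B'}| ≤ ε and |K_∅| ≤ ε, where f(s) = log(1+exp(s)), K_∅ = f(c), K_{B'} = f(w₁+c) − f(c), K_{Bm} = f(w_m+c) − f(c), and K_B = f(w₁+w_m+c) − f(w₁+c) − f(w_m+c) + f(c); i.e. the pair (K_B, K_{B'}) can approximate (J, 0) whenever J ≥ 0. -/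
theorem edge_pair_sufficiency_card_two (J : ℝ) (hJ : 0 ≤ J) (ε : ℝ) (hε : 0 < ε)
    (f : ℝ → ℝ) (hf : ∀ s, f s = Real.log (1 + Real.exp s)) :
    ∃ w₁ wₘ c : ℝ,
      |(f (w₁ + wₘ + c) - f (w₁ + c) - f (wₘ + c) + f c) - J| ≤ ε ∧
      |f (w₁ + c) - f c| ≤ ε ∧
      |f c| ≤ ε := by
  have hfnn : ∀ x, 0 ≤ f x := fun x => by
    rw [hf]; exact Real.log_nonneg (by linarith [(Real.exp_pos x).le])
  have hfmono : ∀ x y : ℝ, x ≤ y → f x ≤ f y := fun x y h => by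
    rw [hf, hf]
    exact Real.log_le_log (by positivity) (by linarith [Real.exp_le_exp.mpr h])
  set L := Real.log (ε / 4) with hL
  have hfL : f L ≤ ε / 4 := by
    rw [hf, hL, Real.exp_log (by positivity)]
    have := Real.log_le_sub_one_of_pos (show (0:ℝ) < 1 + ε/4 by linarith)
    linarith
  set s := Real.log (Real.exp (J + ε / 2) - 1) with hs
  have hepos : 0 < Real.exp (J + ε / 2) - 1 := by
    have h1 : (1:ℝ) < Real.exp (J + ε / 2) := by
      have := Real.add_one_lt_exp (show J + ε / 2 ≠ 0 by positivity)
      linarith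
    linarith
  have hfs : f s = J + ε / 2 := by
    rw [hf, hs, Real.exp_log hepos]
    have h1 : 1 + (Real.exp (J + ε / 2) - 1) = Real.exp (J + ε / 2) := by ring
    rw [h1, Real.log_exp]
  set M := max (-L) (s - 2 * L) with hM
  have hc : -M ≤ L := by
    have := le_max_left (-L) (s - 2 * L); linarith
  have hw : (s + M) / 2 + -M ≤ L := by
    have := le_max_right (-L) (s - 2 * L); linarith
  have hsum : (s + M) / 2 + (s + M) / 2 + -M = s := by ring
  have hfc : f (-M) ≤ ε / 4 := le_trans (hfmono _ _ hc) hfL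
  have hfw : f ((s + M) / 2 + -M) ≤ ε / 4 := le_trans (hfmono _ _ hw) hfL
  refine ⟨(s + M) / 2, (s + M) / 2, -M, ?_, ?_, ?_⟩
  · rw [hsum, hfs, abs_le]
    constructor <;> linarith [hfnn (-M), hfnn ((s + M) / 2 + -M)]
  · rw [abs_le]
    constructor <;> linarith [hfnn (-M), hfnn ((s + M) / 2 + -M)]
  · rw [abs_le]
    constructor <;> linarith [hfnn (-M)]
end

section
/- Let f(s) = log(1+exp(s)). For any J ∈ ℝ and ε > 0, and any nonempty B ⊆ V, there exist w ∈ ℝ^V with w_i = 0 for i ∉ B, and c ∈ ℝ, such that the Möbius coefficient K_B(w,c) = ∑_{C ⊆ B} (-1)^{|B\C|} f(∑_{i∈C} w_i + c) satisfies |K_B(w,c) − J| < ε. -/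
/-! Adding a vertex `a ∉ B` turns the coefficient into a difference,
`K_{B ∪ {a}}(w, c) = K_B(w, c + w_a) - K_B(w, c)`, and `K_B(w, c) → 0` as `c → -∞` because
the soft-plus `f` vanishes at `-∞`. So, given `w, c'` with `K_B(w, c') ≈ J`, taking `c` very negative
and `w_a = c' - c` gives `K_{B ∪ {a}} ≈ J`. For a single vertex `K_{{a}}(w, c) = f(c + w_a) - f(c)`
is any real number exactly, since `f` maps onto `(0, ∞)`. -/

open Finset

noncomputable def softplusCoeff {V : Type*} [DecidableEq V]
    (w : V → ℝ) (c : ℝ) (B : Finset V) : ℝ :=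
  ∑ C ∈ B.powerset, (-1 : ℝ) ^ ((B \ C).card) * Real.log (1 + Real.exp (∑ i ∈ C, w i + c))

open Filter Topology Real

lemma log_one_add_exp_log_exp_sub_one {p : ℝ} (hp : 0 < p) :
    log (1 + exp (log (exp p - 1))) = p := by
  rw [exp_log (by linarith [add_one_lt_exp hp.ne']), add_sub_cancel, log_exp]

lemma tendsto_log_one_add_exp_atBot : Tendsto (fun x => log (1 + exp x)) atBot (𝓝 0) := by
  have h := tendsto_exp_atBot.const_add 1
  rw [add_zero] at h
  have h' := (continuousAt_log one_ne_zero).tendsto.comp h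
  rwa [log_one] at h'

section softplusCoeff

variable {V : Type*} [DecidableEq V]

lemma softplusCoeff_empty (w : V → ℝ) (c : ℝ) :
    softplusCoeff w c ∅ = log (1 + exp c) := by
  simp [softplusCoeff]

lemma softplusCoeff_congr {w w' : V → ℝ} {B : Finset V} (h : ∀ i ∈ B, w i = w' i) (c : ℝ) :
    softplusCoeff w c B = softplusCoeff w' c B := by
  refine sum_congr rfl fun C hC => ?_
  rw [sum_congr rfl fun i hi => h i (mem_powerset.mp hC hi)]

lemma softplusCoeff_insert (w : V → ℝ) (c : ℝ) {a : V} {B : Finset V} (ha : a ∉ B) :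
    softplusCoeff w c (insert a B) = softplusCoeff w (c + w a) B - softplusCoeff w c B := by
  rw [softplusCoeff, sum_powerset_insert ha, softplusCoeff, softplusCoeff, sub_eq_add_neg,
    ← sum_neg_distrib, add_comm]
  congr 1 <;> refine sum_congr rfl fun C hC => ?_
  · have haC : a ∉ C := fun h => ha (mem_powerset.mp hC h)
    rw [insert_sdiff_insert, sdiff_insert_of_notMem ha, sum_insert haC]
    ring_nf
  · have haC : a ∉ C := fun h => ha (mem_powerset.mp hC h)
    rw [insert_sdiff_of_notMem _ haC, card_insert_of_notMem fun h => ha (mem_sdiff.mp h).1,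
      pow_succ]
    ring

lemma tendsto_softplusCoeff_atBot (w : V → ℝ) (B : Finset V) :
    Tendsto (fun c => softplusCoeff w c B) atBot (𝓝 0) := by
  have h := tendsto_finsetSum B.powerset fun C _ =>
    (tendsto_log_one_add_exp_atBot.comp
      (tendsto_atBot_add_const_left _ (∑ i ∈ C, w i) tendsto_id)).const_mul
      ((-1 : ℝ) ^ (B \ C).card)
  simpa [softplusCoeff] using h

lemma exists_softplusCoeff_singleton_eq (a : V) (J : ℝ) :
    ∃ (w : V → ℝ) (c : ℝ), (∀ i, i ∉ ({a} : Finset V) → w i = 0) ∧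
      softplusCoeff w c {a} = J := by
  obtain ⟨p, q, hp, hq, rfl⟩ : ∃ p q : ℝ, 0 < p ∧ 0 < q ∧ p - q = J :=
    ⟨|J| + 1, |J| + 1 - J, by positivity, by linarith [le_abs_self J], by ring⟩
  set s := log (exp p - 1)
  set c := log (exp q - 1)
  refine ⟨Pi.single a (s - c), c, fun i hi => Pi.single_eq_of_ne (by simpa using hi) _, ?_⟩
  rw [← insert_empty, softplusCoeff_insert _ _ (notMem_empty a), softplusCoeff_empty,
    softplusCoeff_empty, Pi.single_eq_same, add_sub_cancel, log_one_add_exp_log_exp_sub_one hp,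
    log_one_add_exp_log_exp_sub_one hq]

lemma exists_abs_softplusCoeff_insert_sub_lt (w : V → ℝ) (c' : ℝ) {a : V} {B : Finset V}
    (ha : a ∉ B) {ε : ℝ} (hε : 0 < ε) :
    ∃ c, |softplusCoeff (Function.update w a (c' - c)) c (insert a B) -
      softplusCoeff w c' B| < ε := by
  obtain ⟨c, hc⟩ := ((tendsto_softplusCoeff_atBot w B).eventually
    (Metric.ball_mem_nhds 0 hε)).exists
  refine ⟨c, ?_⟩
  have hagree : ∀ i ∈ B, Function.update w a (c' - c) i = w i := fun i hi =>
    Function.update_of_ne (ne_of_mem_of_not_mem hi ha) _ _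
  rw [softplusCoeff_insert _ _ ha, softplusCoeff_congr hagree, softplusCoeff_congr hagree,
    Function.update_self, add_sub_cancel, sub_sub_cancel_left, abs_neg]
  simpa [Real.dist_eq] using hc

end softplusCoeff

theorem younes_lemma_general
    {V : Type*} [DecidableEq V]
    (B : Finset V) (hB : B.Nonempty) (J : ℝ) (ε : ℝ) (hε : 0 < ε) :
    ∃ (w : V → ℝ) (c : ℝ),
      (∀ i, i ∉ B → w i = 0) ∧ |softplusCoeff w c B - J| < ε := by
  induction hB using Nonempty.cons_induction generalizing J ε with
  | singleton a =>
    obtain ⟨w, c, hw, hJ⟩ := exists_softplusCoeff_singleton_eq a J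
    exact ⟨w, c, hw, by simpa [hJ] using hε⟩
  | cons a B ha _ ih =>
    obtain ⟨w, c', hw, hc'⟩ := ih J (ε / 2) (half_pos hε)
    obtain ⟨c, hc⟩ := exists_abs_softplusCoeff_insert_sub_lt w c' ha (half_pos hε)
    refine ⟨Function.update w a (c' - c), c, fun i hi => ?_, ?_⟩
    · rw [cons_eq_insert, mem_insert, not_or] at hi
      rw [Function.update_of_ne hi.1, hw i hi.2]
    · rw [cons_eq_insert]
      rw [abs_sub_lt_iff] at hc hc' ⊢
      constructor <;> linarith

theorem younes_lemma
    {V : Type*} [Fintype V] [DecidableEq V]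
    (B : Finset V) (hB : B.Nonempty) (J : ℝ) (ε : ℝ) (hε : 0 < ε) :
    ∃ (w : V → ℝ) (c : ℝ),
      (∀ i, i ∉ B → w i = 0) ∧ |softplusCoeff w c B - J| < ε :=
  younes_lemma_general B hB J ε hε
end
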